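/- arXiv:1906.12334 — 4 statements merged into one kernel-verified Lean document; each statement's English description precedes it below -/
import Mathlib

section
/- Let G = (V, E) be a finite simple undirected graph, let k ≥ 1, and let e = (u, v) be an anchor edge joining two non-adjacent vertices of G. If e has at least one follower, i.e. F({e}, G) = V(C_k(G + e)) \ V(C_k(G)) is nonempty, then u ∈ V(C_{k-1}(G)) and v ∈ V(C_{k-1}(G)), and moreover at least one of u and v lies in the (k-1)-shell H_{k-1}(G). -/
/-!
Let `G' = G + uv`. A vertex set in which `G'` has minimum degree `k` loses at most one
neighbor per vertex when the anchor edge is dropped, so `C_k(G') ⊆ C_{k-1}(G)`. If `u` or `v`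
is missing from `C_k(G')`, the anchor edge does not occur inside `C_k(G')`, which is then
already a witness for `C_k(G)`; if both `u` and `v` lie in `C_k(G)`, then every vertex of
`C_k(G') \ C_k(G)` keeps its `G'`-degree in `G`, so `C_k(G') ∪ C_k(G)` witnesses for `C_k(G)`.
Either way there would be no follower.
-/

open SimpleGraph

variable {V : Type*}

/-- The vertex set of the `k`-core of `G`: the largest set `S` such that every
vertex of `S` has at least `k` neighbors in `S` (realized as the union of all
such sets). -/
def coreSet (G : SimpleGraph V) (k : ℕ) : Set V :=
  {u | ∃ S : Set V, u ∈ S ∧ ∀ v ∈ S, k ≤ (S ∩ G.neighborSet v).ncard}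

def followers (G : SimpleGraph V) (k : ℕ) (A : Set (Sym2 V)) : Set V :=
  coreSet (G ⊔ SimpleGraph.fromEdgeSet A) k \ coreSet G k

def MinDegreeOn (G : SimpleGraph V) (k : ℕ) (S : Set V) : Prop :=
  ∀ v ∈ S, k ≤ (S ∩ G.neighborSet v).ncard

section MinDegreeOn

variable {G H : SimpleGraph V} {k d : ℕ} {S T : Set V}

theorem MinDegreeOn.subset_coreSet (hS : MinDegreeOn G k S) : S ⊆ coreSet G k :=
  fun _ hu => ⟨S, hu, hS⟩

theorem minDegreeOn_coreSet [Finite V] (G : SimpleGraph V) (k : ℕ) :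
    MinDegreeOn G k (coreSet G k) := by
  rintro w ⟨S, hwS, hS⟩
  calc k ≤ (S ∩ G.neighborSet w).ncard := hS w hwS
    _ ≤ (coreSet G k ∩ G.neighborSet w).ncard :=
      Set.ncard_le_ncard (Set.inter_subset_inter_left _ (MinDegreeOn.subset_coreSet hS))

theorem MinDegreeOn.of_sup_of_degree_le [Finite V] (hS : MinDegreeOn (G ⊔ H) k S)
    (hH : ∀ w, (H.neighborSet w).ncard ≤ d) : MinDegreeOn G (k - d) S := by
  intro w hw
  have hle : (S ∩ (G ⊔ H).neighborSet w).ncard ≤ (S ∩ G.neighborSet w).ncard + d :=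
    calc (S ∩ (G ⊔ H).neighborSet w).ncard
        ≤ (S ∩ G.neighborSet w ∪ H.neighborSet w).ncard := by
          rw [neighborSet_sup]
          exact Set.ncard_le_ncard (by grind)
      _ ≤ (S ∩ G.neighborSet w).ncard + (H.neighborSet w).ncard := Set.ncard_union_le _ _
      _ ≤ (S ∩ G.neighborSet w).ncard + d := Nat.add_le_add_left (hH w) _
  have := hS w hw
  omega

theorem MinDegreeOn.of_sup_of_forall_not_adj (hS : MinDegreeOn (G ⊔ H) k S)
    (hH : ∀ w ∈ S, ∀ x ∈ S, ¬ H.Adj w x) : MinDegreeOn G k S := by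
  intro w hw
  convert hS w hw using 2
  ext x
  simp only [Set.mem_inter_iff, mem_neighborSet, sup_adj]
  constructor
  · exact fun ⟨hx, hadj⟩ => ⟨hx, Or.inl hadj⟩
  · exact fun ⟨hx, hadj⟩ => ⟨hx, hadj.resolve_right (hH w hw x hx)⟩

theorem MinDegreeOn.union_of_sup [Finite V] (hT : MinDegreeOn G k T)
    (hS : MinDegreeOn (G ⊔ H) k S) (hH : ∀ w ∉ T, ∀ x, ¬ H.Adj w x) :
    MinDegreeOn G k (S ∪ T) := by
  intro w hw
  by_cases hwT : w ∈ T
  · exact (hT w hwT).trans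
      (Set.ncard_le_ncard (Set.inter_subset_inter_left _ Set.subset_union_right))
  · refine (hS w (hw.resolve_right hwT)).trans (Set.ncard_le_ncard ?_)
    rintro x ⟨hxS, hadj⟩
    exact ⟨Or.inl hxS, hadj.resolve_right (hH w hwT x)⟩

end MinDegreeOn

section AnchorEdge

variable {G : SimpleGraph V} {k : ℕ} {u v : V}

theorem ncard_neighborSet_edge_le_one [Finite V] (w : V) :
    ((edge u v).neighborSet w).ncard ≤ 1 := by
  rw [Set.ncard_le_one_iff]
  intro x y hx hy
  rw [mem_neighborSet, adj_edge] at hx hy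
  exact Sym2.congr_right.mp (hy.1 ▸ hx.1).symm

theorem coreSet_sup_edge_subset_coreSet_pred [Finite V] :
    coreSet (G ⊔ edge u v) k ⊆ coreSet G (k - 1) :=
  ((minDegreeOn_coreSet _ k).of_sup_of_degree_le ncard_neighborSet_edge_le_one).subset_coreSet

theorem coreSet_sup_edge_subset_of_notMem [Finite V]
    (h : ¬ (u ∈ coreSet (G ⊔ edge u v) k ∧ v ∈ coreSet (G ⊔ edge u v) k)) :
    coreSet (G ⊔ edge u v) k ⊆ coreSet G k := by
  refine ((minDegreeOn_coreSet _ k).of_sup_of_forall_not_adj ?_).subset_coreSet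
  intro w hw x hx hadj
  have huv : s(u, v) = s(w, x) := ((adj_edge u v).mp hadj).1
  have hmem : ∀ y, y ∈ s(u, v) → y ∈ coreSet (G ⊔ edge u v) k := by
    rw [huv]
    intro y hy
    rcases Sym2.mem_iff.mp hy with rfl | rfl
    · exact hw
    · exact hx
  exact h ⟨hmem u (Sym2.mem_mk_left u v), hmem v (Sym2.mem_mk_right u v)⟩

theorem coreSet_sup_edge_subset_of_mem [Finite V] (hu : u ∈ coreSet G k)
    (hv : v ∈ coreSet G k) : coreSet (G ⊔ edge u v) k ⊆ coreSet G k := by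
  refine Set.subset_union_left.trans
    ((minDegreeOn_coreSet G k).union_of_sup (minDegreeOn_coreSet _ k) ?_).subset_coreSet
  intro w hw x hadj
  rcases (edge_adj u v w x).mp hadj with ⟨⟨rfl, -⟩ | ⟨rfl, -⟩, -⟩
  · exact hw hu
  · exact hw hv

end AnchorEdge

theorem stmt_0_general [Fintype V] (G : SimpleGraph V) (k : ℕ) (u v : V)
    (hfol : (followers G k {s(u, v)}).Nonempty) :
    u ∈ coreSet G (k - 1) ∧ v ∈ coreSet G (k - 1) ∧
      (u ∈ coreSet G (k - 1) \ coreSet G k ∨ v ∈ coreSet G (k - 1) \ coreSet G k) := by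
  obtain ⟨w, hw', hw⟩ : (coreSet (G ⊔ edge u v) k \ coreSet G k).Nonempty := hfol
  have hpred : coreSet (G ⊔ edge u v) k ⊆ coreSet G (k - 1) :=
    coreSet_sup_edge_subset_coreSet_pred
  have hanchor : u ∈ coreSet (G ⊔ edge u v) k ∧ v ∈ coreSet (G ⊔ edge u v) k :=
    not_not.mp fun h => hw (coreSet_sup_edge_subset_of_notMem h hw')
  have hshell : ¬ (u ∈ coreSet G k ∧ v ∈ coreSet G k) :=
    fun ⟨hu, hv⟩ => hw (coreSet_sup_edge_subset_of_mem hu hv hw')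
  refine ⟨hpred hanchor.1, hpred hanchor.2, ?_⟩
  by_cases hu : u ∈ coreSet G k
  · exact Or.inr ⟨hpred hanchor.2, fun hv => hshell ⟨hu, hv⟩⟩
  · exact Or.inl ⟨hpred hanchor.1, hu⟩

/-- If the anchor edge `e = (u, v)` joining two non-adjacent vertices of `G` has at
least one follower (w.r.t. the `k`-core, `k ≥ 1`), then `u` and `v` both belong to
the `(k-1)`-core of `G`, and at least one of them lies in the `(k-1)`-shell
`H_{k-1}(G) = V(C_{k-1}(G)) \ V(C_k(G))`. -/
theorem stmt_0 [Fintype V] (G : SimpleGraph V) (k : ℕ) (hk : 1 ≤ k)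
    (u v : V) (huv : u ≠ v) (hadj : ¬ G.Adj u v)
    (hfol : (followers G k {s(u, v)}).Nonempty) :
    u ∈ coreSet G (k - 1) ∧ v ∈ coreSet G (k - 1) ∧
      (u ∈ coreSet G (k - 1) \ coreSet G k ∨ v ∈ coreSet G (k - 1) \ coreSet G k) :=
  stmt_0_general G k u v hfol
end

section
/- Let G = (V, E) be a finite simple undirected graph, let k ∈ ℕ, and let e = (u, v) be an edge joining two non-adjacent vertices of G. If V(C_k(G + e)) ≠ V(C_k(G)), then both endpoints u and v belong to V(C_k(G + e)). -/
open SimpleGraph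

variable {V : Type*}

/-! A vertex outside the `k`-core of `G + uv` cannot have used the new edge, so the core of
`G + uv` already has minimum degree `k` in `G`, and by maximality it is the core of `G`.
Hence if the core changes, both `u` and `v` lie in the new core. -/

section Finite

variable [Finite V] {G H : SimpleGraph V} {k : ℕ}

lemma coreSet_mono (h : G ≤ H) : coreSet G k ⊆ coreSet H k := by
  rintro x ⟨S, hxS, hS⟩
  exact ⟨S, hxS, fun w hw =>
    (hS w hw).trans (Set.ncard_le_ncard (Set.inter_subset_inter_right _ fun _ => (h ·)))⟩

lemma le_ncard_coreSet_inter_neighborSet {w : V} (hw : w ∈ coreSet G k) :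
    k ≤ (coreSet G k ∩ G.neighborSet w).ncard := by
  obtain ⟨S, hwS, hS⟩ := hw
  exact (hS w hwS).trans
    (Set.ncard_le_ncard (Set.inter_subset_inter_left _ fun y hy => ⟨S, hy, hS⟩))

end Finite

lemma inter_neighborSet_sup_edge {S : Set V} {G : SimpleGraph V} {u v w : V}
    (hu : u ∉ S) (hw : w ∈ S) :
    S ∩ (G ⊔ fromEdgeSet {s(u, v)}).neighborSet w = S ∩ G.neighborSet w := by
  ext y
  simp only [Set.mem_inter_iff, mem_neighborSet, sup_adj, fromEdgeSet_adj,
    Set.mem_singleton_iff, Sym2.eq_iff]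
  constructor
  · rintro ⟨hy, hadj | ⟨⟨rfl, rfl⟩ | ⟨rfl, rfl⟩, -⟩⟩
    exacts [⟨hy, hadj⟩, (hu hw).elim, (hu hy).elim]
  · exact fun ⟨hy, hadj⟩ => ⟨hy, Or.inl hadj⟩

lemma coreSet_sup_edge_eq_of_notMem [Finite V] {G : SimpleGraph V} {k : ℕ} {u v : V}
    (hu : u ∉ coreSet (G ⊔ fromEdgeSet {s(u, v)}) k) :
    coreSet (G ⊔ fromEdgeSet {s(u, v)}) k = coreSet G k := by
  refine Set.Subset.antisymm ?_ (coreSet_mono le_sup_left)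
  intro x hx
  refine ⟨_, hx, fun w hw => ?_⟩
  rw [← inter_neighborSet_sup_edge hu hw]
  exact le_ncard_coreSet_inter_neighborSet hw

theorem stmt_1_general [Fintype V] (G : SimpleGraph V) (k : ℕ)
    (u v : V)
    (hne : coreSet (G ⊔ SimpleGraph.fromEdgeSet {s(u, v)}) k ≠ coreSet G k) :
    u ∈ coreSet (G ⊔ SimpleGraph.fromEdgeSet {s(u, v)}) k ∧
      v ∈ coreSet (G ⊔ SimpleGraph.fromEdgeSet {s(u, v)}) k := by
  constructor
  · by_contra hu
    exact hne (coreSet_sup_edge_eq_of_notMem hu)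
  · by_contra hv
    rw [Sym2.eq_swap] at hne hv
    exact hne (coreSet_sup_edge_eq_of_notMem hv)

/-- If adding the edge `e = (u, v)` between two non-adjacent vertices of `G` changes
the vertex set of the `k`-core, then both endpoints `u` and `v` belong to the
`k`-core of `G + e`. -/
theorem stmt_1 [Fintype V] (G : SimpleGraph V) (k : ℕ)
    (u v : V) (huv : u ≠ v) (hadj : ¬ G.Adj u v)
    (hne : coreSet (G ⊔ SimpleGraph.fromEdgeSet {s(u, v)}) k ≠ coreSet G k) :
    u ∈ coreSet (G ⊔ SimpleGraph.fromEdgeSet {s(u, v)}) k ∧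
      v ∈ coreSet (G ⊔ SimpleGraph.fromEdgeSet {s(u, v)}) k :=
  stmt_1_general G k u v hne
end

section
/- Let G = (V, E) be a finite simple undirected graph, let k ∈ ℕ, and let e = (u, v) and e₁ be two edges each joining non-adjacent vertices of G. If both endpoints u and v of e belong to V(C_k(G + e₁)), then V(C_k(G + e)) ⊆ V(C_k(G + e₁)). -/
/-!
A vertex `w` of the `k`-core of `G + e` that is not an endpoint of `e` has the same neighbours in
`G + e` as in `G`, hence no fewer in `G + e₁`. So if both endpoints of `e` lie in the `k`-core
of `G + e₁`, the union of the two cores is a set in which every vertex has at least `k`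
neighbours in `G + e₁`, and it is therefore contained in the `k`-core of `G + e₁`.
-/

open SimpleGraph

variable {V : Type*}

namespace SimpleGraph

section coreSet

variable {G H : SimpleGraph V} {k : ℕ}

lemma subset_coreSet {S : Set V} (hS : ∀ w ∈ S, k ≤ (S ∩ G.neighborSet w).ncard) :
    S ⊆ coreSet G k :=
  fun _ hw => ⟨S, hw, hS⟩

lemma le_ncard_coreSet_inter_neighborSet [Finite V] {w : V} (hw : w ∈ coreSet G k) :
    k ≤ (coreSet G k ∩ G.neighborSet w).ncard := by
  obtain ⟨S, hwS, hS⟩ := hw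
  calc k ≤ (S ∩ G.neighborSet w).ncard := hS w hwS
    _ ≤ _ := Set.ncard_le_ncard
        (Set.inter_subset_inter_left _ (subset_coreSet hS)) (Set.toFinite _)

lemma coreSet_subset_of_neighborSet_subset [Finite V]
    (hN : ∀ w ∈ coreSet G k, w ∉ coreSet H k → G.neighborSet w ⊆ H.neighborSet w) :
    coreSet G k ⊆ coreSet H k := by
  refine Set.subset_union_left.trans
    (subset_coreSet (S := coreSet G k ∪ coreSet H k) fun w hw => ?_)
  by_cases hwH : w ∈ coreSet H k
  · exact (le_ncard_coreSet_inter_neighborSet hwH).trans <| Set.ncard_le_ncard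
      (Set.inter_subset_inter_left _ Set.subset_union_right) (Set.toFinite _)
  · have hwG : w ∈ coreSet G k := hw.resolve_right hwH
    exact (le_ncard_coreSet_inter_neighborSet hwG).trans <| Set.ncard_le_ncard
      (Set.inter_subset_inter Set.subset_union_left (hN w hwG hwH)) (Set.toFinite _)

end coreSet

lemma neighborSet_sup_fromEdgeSet_subset_of_ne (G : SimpleGraph V) (A : Set (Sym2 V))
    {u v w : V} (hwu : w ≠ u) (hwv : w ≠ v) :
    (G ⊔ fromEdgeSet {s(u, v)}).neighborSet w ⊆ (G ⊔ fromEdgeSet A).neighborSet w := by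
  rintro y (hy | ⟨hy, -⟩)
  · exact Or.inl hy
  · rcases Sym2.eq_iff.mp hy with ⟨rfl, -⟩ | ⟨rfl, -⟩
    exacts [absurd rfl hwu, absurd rfl hwv]

end SimpleGraph

theorem stmt_5_general [Fintype V] (G : SimpleGraph V) (k : ℕ)
    (u v : V)
    (u₁ v₁ : V)
    (hu : u ∈ coreSet (G ⊔ SimpleGraph.fromEdgeSet {s(u₁, v₁)}) k)
    (hv : v ∈ coreSet (G ⊔ SimpleGraph.fromEdgeSet {s(u₁, v₁)}) k) :
    coreSet (G ⊔ SimpleGraph.fromEdgeSet {s(u, v)}) k ⊆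
      coreSet (G ⊔ SimpleGraph.fromEdgeSet {s(u₁, v₁)}) k :=
  coreSet_subset_of_neighborSet_subset fun _ _ hw =>
    G.neighborSet_sup_fromEdgeSet_subset_of_ne _ (fun h => hw (h ▸ hu)) (fun h => hw (h ▸ hv))

/-- Let `e = (u, v)` and `e₁ = (u₁, v₁)` be two edges each joining non-adjacent
vertices of `G`. If both endpoints of `e` belong to the `k`-core of `G + e₁`, then
the `k`-core of `G + e` is contained in the `k`-core of `G + e₁`. -/
theorem stmt_5 [Fintype V] (G : SimpleGraph V) (k : ℕ)
    (u v : V) (huv : u ≠ v) (hadj : ¬ G.Adj u v)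
    (u₁ v₁ : V) (hu₁v₁ : u₁ ≠ v₁) (hadj₁ : ¬ G.Adj u₁ v₁)
    (hu : u ∈ coreSet (G ⊔ SimpleGraph.fromEdgeSet {s(u₁, v₁)}) k)
    (hv : v ∈ coreSet (G ⊔ SimpleGraph.fromEdgeSet {s(u₁, v₁)}) k) :
    coreSet (G ⊔ SimpleGraph.fromEdgeSet {s(u, v)}) k ⊆
      coreSet (G ⊔ SimpleGraph.fromEdgeSet {s(u₁, v₁)}) k :=
  stmt_5_general G k u v u₁ v₁ hu hv
end

section
/- For every integer k ≥ 2, the follower-count function is not submodular: there exist a finite simple undirected graph G = (V, E) and two sets A, B of edges joining non-adjacent vertex pairs of G such that |F(A, G)| + |F(B, G)| < |F(A ∪ B, G)| + |F(A ∩ B, G)| (with followers computed with respect to k). -/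
open SimpleGraph

variable {V : Type*}

namespace Stmt6Aux

/-- clique `0,…,k+1` plus apex `k+2` joined to `0,…,k-3`. -/
def Gk (k : ℕ) : SimpleGraph (Fin (k+3)) where
  Adj i j := i ≠ j ∧ ((i.val ≤ k+1 ∧ j.val ≤ k+1) ∨ (i.val = k+2 ∧ j.val < k-2) ∨
      (j.val = k+2 ∧ i.val < k-2))
  symm := ⟨by rintro i j ⟨h1, h2⟩; exact ⟨h1.symm, by tauto⟩⟩
  loopless := ⟨by rintro i ⟨h1, _⟩; exact h1 rfl⟩

def apex (k : ℕ) : Fin (k+3) := ⟨k+2, by omega⟩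
def vx (k : ℕ) : Fin (k+3) := ⟨k-2, by omega⟩
def vy (k : ℕ) : Fin (k+3) := ⟨k-1, by omega⟩

@[simp] lemma apex_val (k : ℕ) : (apex k : ℕ) = k+2 := rfl
@[simp] lemma vx_val (k : ℕ) : (vx k : ℕ) = k-2 := rfl
@[simp] lemma vy_val (k : ℕ) : (vy k : ℕ) = k-1 := rfl

lemma ncard_ge {n m : ℕ} (s : Set (Fin n)) (f : Fin m → Fin n)
    (hinj : Function.Injective f) (hmem : ∀ i, f i ∈ s) : m ≤ s.ncard := by
  have h1 : Set.range f ⊆ s := Set.range_subset_iff.2 hmem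
  have h2 : (Set.range f).ncard = m := by
    rw [← Set.image_univ, Set.ncard_image_of_injective _ hinj]
    simp [Set.ncard_univ]
  calc m = (Set.range f).ncard := h2.symm
    _ ≤ s.ncard := Set.ncard_le_ncard h1 (Set.toFinite _)

lemma ncard_le {n m : ℕ} (s : Set (Fin n)) (f : Fin m → Fin n)
    (hsub : ∀ x ∈ s, ∃ i, f i = x) : s.ncard ≤ m := by
  have h1 : s ⊆ Set.range f := fun x hx => hsub x hx
  have h2 : (Set.range f).ncard ≤ m := by
    rw [← Set.image_univ]
    have := Set.ncard_image_le (f := f) (s := (Set.univ : Set (Fin m))) (Set.toFinite _)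
    simpa [Set.ncard_univ] using this
  exact le_trans (Set.ncard_le_ncard h1 (Set.toFinite _)) h2

lemma coreSet_mono {n k : ℕ} {G H : SimpleGraph (Fin n)} (h : G ≤ H) :
    coreSet G k ⊆ coreSet H k := by
  rintro u ⟨S, hu, hS⟩
  refine ⟨S, hu, fun v hv => le_trans (hS v hv) (Set.ncard_le_ncard ?_ (Set.toFinite _))⟩
  exact fun w hw => ⟨hw.1, h hw.2⟩

/-- any vertex of low degree is not in the core. -/
lemma not_core_of_deg_lt {n k : ℕ} (H : SimpleGraph (Fin n)) (u : Fin n)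
    (hdeg : (H.neighborSet u).ncard < k) : u ∉ coreSet H k := by
  rintro ⟨S, hmem, hS⟩
  have h1 := hS _ hmem
  have h2 : (S ∩ H.neighborSet u).ncard ≤ (H.neighborSet u).ncard :=
    Set.ncard_le_ncard Set.inter_subset_right (Set.toFinite _)
  omega

lemma clique_subset_core {k : ℕ} (hk : 2 ≤ k) (H : SimpleGraph (Fin (k+3)))
    (hGH : Gk k ≤ H) : {u : Fin (k+3) | u.val ≤ k+1} ⊆ coreSet H k := by
  refine Set.Subset.trans ?_ (coreSet_mono hGH)
  intro u hu
  refine ⟨{u : Fin (k+3) | u.val ≤ k+1}, hu, fun v hv => ?_⟩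
  refine ncard_ge _ (fun i : Fin k =>
    if (i : ℕ) < (v : ℕ) then ⟨i, by omega⟩ else ⟨i+1, by omega⟩) ?_ ?_
  · intro a b hab
    have h := congrArg Fin.val hab
    simp only [apply_ite Fin.val] at h
    split_ifs at h <;> (apply Fin.ext; omega)
  · intro i
    have hik : (i : ℕ) < k := i.isLt
    have hv' : (v : ℕ) ≤ k + 1 := hv
    constructor
    · show (if (i : ℕ) < (v : ℕ) then (⟨i, by omega⟩ : Fin (k+3)) else ⟨i+1, by omega⟩).val ≤ k+1
      split_ifs <;> first | omega | (simp; omega) | simp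
    · show (Gk k).Adj v _
      constructor
      · intro hvi
        have h := congrArg Fin.val hvi
        simp only [apply_ite Fin.val] at h
        split_ifs at h <;> omega
      · left
        refine ⟨hv', ?_⟩
        simp only [apply_ite Fin.val]
        split_ifs <;> first | omega | (simp; omega) | simp

lemma core_subset_clique {k : ℕ} (H : SimpleGraph (Fin (k+3)))
    (hdeg : (H.neighborSet (apex k)).ncard < k) :
    coreSet H k ⊆ {u : Fin (k+3) | u.val ≤ k+1} := by
  intro u hu
  by_contra h
  have hu2 : (u : ℕ) = k + 2 := by have := u.isLt; simp only [Set.mem_setOf_eq] at h; omega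
  have : u = apex k := Fin.ext hu2
  exact not_core_of_deg_lt H (apex k) hdeg (this ▸ hu)

end Stmt6Aux

open Stmt6Aux in
/-- For every `k ≥ 2`, the follower-count function is not submodular: there exist a
finite graph `G` and two sets `A`, `B` of edges joining non-adjacent vertex pairs of
`G` with `|F(A)| + |F(B)| < |F(A ∪ B)| + |F(A ∩ B)|`. -/
theorem stmt_6 (k : ℕ) (hk : 2 ≤ k) :
    ∃ (n : ℕ) (G : SimpleGraph (Fin n)) (A B : Set (Sym2 (Fin n))),
      (∀ e ∈ A, ¬ e.IsDiag ∧ e ∉ G.edgeSet) ∧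
      (∀ e ∈ B, ¬ e.IsDiag ∧ e ∉ G.edgeSet) ∧
      (followers G k A).ncard + (followers G k B).ncard <
        (followers G k (A ∪ B)).ncard + (followers G k (A ∩ B)).ncard := by
  refine ⟨k+3, Gk k, {s(apex k, vx k)}, {s(apex k, vy k)}, ?_, ?_, ?_⟩
  · rintro e rfl
    constructor
    · rw [Sym2.mk_isDiag_iff]
      intro h; have := congrArg Fin.val h; simp at this; omega
    · rw [SimpleGraph.mem_edgeSet]
      rintro ⟨h1, h2⟩
      simp only [Gk, apex, vx] at h2
      omega
  · rintro e rfl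
    constructor
    · rw [Sym2.mk_isDiag_iff]
      intro h; have := congrArg Fin.val h; simp at this; omega
    · rw [SimpleGraph.mem_edgeSet]
      rintro ⟨h1, h2⟩
      simp only [Gk, apex, vy] at h2
      omega
  · -- the three degree bounds for the apex
    have hne_xy : vx k ≠ vy k := by
      intro h; have := congrArg Fin.val h; simp at this; omega
    have hAB : ({s(apex k, vx k)} ∩ {s(apex k, vy k)} : Set (Sym2 (Fin (k+3)))) = ∅ := by
      ext e
      simp only [Set.mem_inter_iff, Set.mem_singleton_iff, Set.mem_empty_iff_false, iff_false]
      rintro ⟨rfl, h2⟩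
      rcases Sym2.eq_iff.mp h2 with ⟨-, h⟩ | ⟨h, -⟩
      · exact hne_xy h
      · have := congrArg Fin.val h; simp at this; omega
    -- followers of A∩B = ∅
    have hFcap : followers (Gk k) k ({s(apex k, vx k)} ∩ {s(apex k, vy k)}) = ∅ := by
      rw [hAB]
      simp [followers]
    -- clique is contained in all the cores
    have hclique : ∀ H : SimpleGraph (Fin (k+3)), Gk k ≤ H →
        {u : Fin (k+3) | u.val ≤ k+1} ⊆ coreSet H k := fun H h => clique_subset_core hk H h
    -- apex degree in Gk + single anchor is < k
    have hdegA : ∀ (w : Fin (k+3)), (w : ℕ) < k →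
        ((Gk k ⊔ SimpleGraph.fromEdgeSet {s(apex k, w)}).neighborSet (apex k)).ncard < k := by
      intro w hw
      have : ((Gk k ⊔ SimpleGraph.fromEdgeSet {s(apex k, w)}).neighborSet (apex k)).ncard
          ≤ k - 1 := by
        refine ncard_le _ (fun i : Fin (k-1) =>
          if (i : ℕ) < k - 2 then ⟨i, by omega⟩ else w) ?_
        intro x hx
        simp only [SimpleGraph.mem_neighborSet, SimpleGraph.sup_adj,
          SimpleGraph.fromEdgeSet_adj, Set.mem_singleton_iff] at hx
        rcases hx with ⟨h1, h2⟩ | ⟨h1, h2⟩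
        · -- Gk adjacency: x.val < k-2
          have hx2 : (x : ℕ) < k - 2 := by
            rcases h2 with ⟨_, h⟩ | ⟨_, h⟩ | ⟨h, _⟩
            · simp at * <;> omega
            · exact h
            · exfalso; exact h1 (Fin.ext (by simp; omega))
          exact ⟨⟨x, by omega⟩, by simp [hx2]⟩
        · -- anchor edge: x = w
          have hx2 : x = w := by
            rcases Sym2.eq_iff.mp h1 with ⟨-, h⟩ | ⟨h, -⟩
            · exact h
            · exfalso; apply h2; rw [h]
              exact Fin.ext (by simp at *; omega)
          refine ⟨⟨k-2, by omega⟩, ?_⟩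
          simp [hx2]
      omega
    -- followers of single anchors are empty
    have hsingle : ∀ (w : Fin (k+3)), (w : ℕ) < k →
        followers (Gk k) k {s(apex k, w)} = ∅ := by
      intro w hw
      have hsub := core_subset_clique (Gk k ⊔ SimpleGraph.fromEdgeSet {s(apex k, w)})
        (hdegA w hw)
      have hcl := hclique (Gk k) le_rfl
      apply Set.eq_empty_iff_forall_notMem.mpr
      rintro u ⟨h1, h2⟩
      exact h2 (hcl (hsub h1))
    have hvx : ((vx k : Fin (k+3)) : ℕ) < k := by simp; omega
    have hvy : ((vy k : Fin (k+3)) : ℕ) < k := by simp; omega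
    have hFA := hsingle (vx k) hvx
    have hFB := hsingle (vy k) hvy
    -- apex is a follower of A ∪ B
    have hapex : apex k ∈ followers (Gk k) k ({s(apex k, vx k)} ∪ {s(apex k, vy k)}) := by
      constructor
      · -- apex in core of G + A ∪ B : witness S = univ
        refine ⟨Set.univ, Set.mem_univ _, fun v _ => ?_⟩
        rcases Nat.lt_or_ge (v : ℕ) (k+2) with hv | hv
        · -- clique vertex: k neighbors inside the clique
          refine ncard_ge _ (fun i : Fin k =>
            if (i : ℕ) < (v : ℕ) then ⟨i, by omega⟩ else ⟨i+1, by omega⟩) ?_ ?_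
          · intro a b hab
            have h := congrArg Fin.val hab
            simp only [apply_ite Fin.val] at h
            split_ifs at h <;> (apply Fin.ext; omega)
          · intro i
            have hik : (i : ℕ) < k := i.isLt
            refine ⟨Set.mem_univ _, ?_⟩
            show (Gk k ⊔ _).Adj v _
            left
            constructor
            · intro hvi
              have h := congrArg Fin.val hvi
              simp only [apply_ite Fin.val] at h
              split_ifs at h <;> omega
            · left
              constructor
              · omega
              · simp only [apply_ite Fin.val]
                split_ifs <;> first | omega | (simp; omega) | simp
        · -- v = apex
          have hva : v = apex k := Fin.ext (by have := v.isLt; simp; omega)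
          subst hva
          refine ncard_ge _ (fun i : Fin k =>
            if (i : ℕ) < k-2 then ⟨i, by omega⟩ else if (i : ℕ) = k-2 then vx k else vy k)
            ?_ ?_
          · intro a b hab
            have h := congrArg Fin.val hab
            have hak : (a : ℕ) < k := a.isLt
            have hbk : (b : ℕ) < k := b.isLt
            simp only [apply_ite Fin.val, vx_val, vy_val] at h
            split_ifs at h <;> (apply Fin.ext; omega)
          · intro i
            have hik : (i : ℕ) < k := i.isLt
            refine ⟨Set.mem_univ _, ?_⟩
            show (Gk k ⊔ _).Adj (apex k) _
            beta_reduce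
            split_ifs with h1 h2
            · left
              refine ⟨?_, Or.inr (Or.inl ⟨rfl, h1⟩)⟩
              intro h; have := congrArg Fin.val h; simp at this; omega
            · right
              rw [SimpleGraph.fromEdgeSet_adj]
              refine ⟨Or.inl rfl, ?_⟩
              intro h; have := congrArg Fin.val h; simp at this; omega
            · right
              rw [SimpleGraph.fromEdgeSet_adj]
              refine ⟨Or.inr rfl, ?_⟩
              intro h; have := congrArg Fin.val h; simp at this; omega
      · -- apex not in core of G
        intro hmem
        have hdeg : ((Gk k).neighborSet (apex k)).ncard < k := by
          have : ((Gk k).neighborSet (apex k)).ncard ≤ k - 2 := by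
            refine ncard_le _ (fun i : Fin (k-2) => ⟨i, by omega⟩) ?_
            intro x hx
            simp only [SimpleGraph.mem_neighborSet] at hx
            obtain ⟨h1, h2⟩ := hx
            have hx2 : (x : ℕ) < k - 2 := by
              rcases h2 with ⟨h, _⟩ | ⟨_, h⟩ | ⟨h, _⟩
              · simp at h <;> omega
              · exact h
              · exfalso; exact h1 (Fin.ext (by simp; omega))
            exact ⟨⟨x, hx2⟩, rfl⟩
          omega
        exact not_core_of_deg_lt _ _ hdeg hmem
    have hpos : 0 < (followers (Gk k) k ({s(apex k, vx k)} ∪ {s(apex k, vy k)})).ncard :=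
      (Set.ncard_pos (Set.toFinite _)).mpr ⟨apex k, hapex⟩
    rw [hFA, hFB, hFcap]
    simpa using hpos
end
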